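/- Let R be a commutative ring, q ∈ R, and (A, σ_A) a twisted commutative R-algebra with y ∈ A satisfying σ_A(y) = qy. Then the unique σ_A-semilinear endomorphism σ of the twisted divided power polynomial ring A⟨ξ⟩_{q,y} satisfying σ(ξ^{[n]}) = Σ_{i=0}^{n} y^i ξ^{[n−i]} for all n ∈ ℕ is a ring homomorphism; moreover the A-algebra morphism A[ξ] → A⟨ξ⟩_{q,y} sending ξ^{(n)} to (n)_q! ξ^{[n]} intertwines the σ_A-semilinear endomorphism of A[ξ] with σ(ξ) = ξ + y and the endomorphism σ of A⟨ξ⟩_{q,y}. -/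

import Mathlib

def qInt {R : Type*} [CommRing R] (q : R) (m : ℕ) : R := ∑ i ∈ Finset.range m, q ^ i

def qFact {R : Type*} [CommRing R] (q : R) : ℕ → R
  | 0 => 1
  | n + 1 => qFact q n * qInt q (n + 1)

def qChoose {R : Type*} [CommRing R] (q : R) : ℕ → ℕ → R
  | _, 0 => 1
  | 0, _ + 1 => 0
  | n + 1, k + 1 => qChoose q n k + q ^ (k + 1) * qChoose q n (k + 1)

noncomputable def twistedPow {A : Type*} [CommRing A] (q y : A) (n : ℕ) : Polynomial A :=
  ∏ i ∈ Finset.range n, (Polynomial.X + Polynomial.C (qInt q i * y))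

def dpCoeff {A : Type*} [CommRing A] (q y : A) (m n i : ℕ) : A :=
  (-1 : A) ^ i * q ^ (i * (i - 1) / 2) * qChoose q (m + n - i) m * qChoose q m i * y ^ i

/-!
Multiplicativity of `σ` on basis vectors says that, for all `m n s`, the coefficients of
`y ^ s ξ^{[m+n-s]}` in `σ(ξ^{[m]} ξ^{[n]})` and in `σ(ξ^{[m]}) σ(ξ^{[n]})` agree. Both are
integer polynomials in `q`, so it suffices to check this over `ℤ[q]`, hence over its fraction
field `K`. There the `q`-factorials are invertible, `ξ^{[n]}` can be realised as
`ξ^{(n)} / (n)_q!` in `K[y][ξ]`, and `σ` becomes the ring endomorphism `ξ ↦ ξ + y`, `y ↦ q y`,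
which is multiplicative. Once `σ` is known to be a ring endomorphism, the intertwining property
only has to be checked on the generators `C a` and `X` of `A[ξ]`, where `T X = ξ^{[1]}`.
-/

open Finset Polynomial

section QArithmetic

variable {R : Type*} [CommRing R] (q : R)

lemma qInt_zero : qInt q 0 = 0 := by simp [qInt]

lemma qInt_add (a b : ℕ) : qInt q (a + b) = qInt q a + q ^ a * qInt q b := by
  simp only [qInt, sum_range_add, pow_add, mul_sum]

lemma qInt_succ (n : ℕ) : qInt q (n + 1) = 1 + q * qInt q n := by
  simpa [add_comm, qInt] using qInt_add q 1 n

lemma qFact_one : qFact q 1 = 1 := by simp [qFact, qInt]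

lemma qInt_one_left (m : ℕ) : qInt (1 : R) m = m := by simp [qInt]

lemma qFact_one_left (n : ℕ) : qFact (1 : R) n = n.factorial := by
  induction n with
  | zero => simp [qFact]
  | succ n ih => simp [qFact, ih, qInt_one_left, Nat.factorial_succ, mul_comm]

lemma qChoose_zero_right (n : ℕ) : qChoose q n 0 = 1 := by cases n <;> rfl

lemma qChoose_succ_succ (n k : ℕ) :
    qChoose q (n + 1) (k + 1) = qChoose q n k + q ^ (k + 1) * qChoose q n (k + 1) := rfl

lemma qChoose_eq_zero_of_lt {n k : ℕ} (h : n < k) : qChoose q n k = 0 := by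
  induction n generalizing k with
  | zero => obtain ⟨k, rfl⟩ := Nat.exists_eq_add_of_lt h; rfl
  | succ n ih =>
    obtain ⟨k, rfl⟩ : ∃ k', k = k' + 1 := ⟨k - 1, by omega⟩
    rw [qChoose_succ_succ, ih (by omega), ih (by omega), mul_zero, add_zero]

lemma qInt_succ_mul_qChoose_succ (m k : ℕ) :
    qInt q (k + 1) * qChoose q m (k + 1) = qInt q (m - k) * qChoose q m k := by
  induction m generalizing k with
  | zero => simp [qChoose_eq_zero_of_lt q (Nat.succ_pos k), qInt_zero]
  | succ m ih =>
    cases k with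
    | zero =>
      have h1 : qChoose q m 1 = qInt q m := by simpa [qInt, qChoose_zero_right] using ih 0
      rw [qChoose_succ_succ, qChoose_zero_right, qChoose_zero_right, h1, Nat.sub_zero,
        qInt_succ q m]
      simp [qInt]
    | succ k =>
      rcases Nat.lt_or_ge k m with h | h
      · have e : qInt q (k + 2) + q ^ (k + 2) * qInt q (m - k - 1)
            = qInt q (k + 1) + q ^ (k + 1) * qInt q (m - k) := by
          rw [← qInt_add, ← qInt_add]; congr 1; omega
        have h1 := ih (k + 1)
        rw [show m - (k + 1) = m - k - 1 by omega] at h1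
        rw [qChoose_succ_succ, qChoose_succ_succ, show m + 1 - (k + 1) = m - k by omega]
        linear_combination qChoose q m (k + 1) * e + q ^ (k + 2) * h1 + ih k
      · rw [qChoose_eq_zero_of_lt q (show m + 1 < k + 2 by omega), mul_zero]
        rcases h.eq_or_lt with rfl | h'
        · rw [Nat.sub_self, qInt_zero, zero_mul]
        · rw [qChoose_eq_zero_of_lt q (show m + 1 < k + 1 by omega), mul_zero]

lemma qFact_eq_qFact_mul_qInt {n : ℕ} (h : 0 < n) : qFact q n = qFact q (n - 1) * qInt q n := by
  obtain ⟨n, rfl⟩ := Nat.exists_eq_add_of_lt h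
  rfl

lemma qChoose_mul_qFact_mul_qFact {m k : ℕ} (h : k ≤ m) :
    qChoose q m k * qFact q k * qFact q (m - k) = qFact q m := by
  induction k with
  | zero => simp [qChoose_zero_right, qFact]
  | succ k ih =>
    rw [← ih (by omega), qFact_eq_qFact_mul_qInt q (show 0 < m - k by omega),
      show m - k - 1 = m - (k + 1) by omega]
    simp only [qFact]
    linear_combination qFact q k * qFact q (m - (k + 1)) * qInt_succ_mul_qChoose_succ q m k

def qDescFactorial (n k : ℕ) : R := ∏ i ∈ range k, qInt q (n - i)

lemma qDescFactorial_succ_right (n k : ℕ) :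
    qDescFactorial q n (k + 1) = qDescFactorial q n k * qInt q (n - k) :=
  prod_range_succ _ _

lemma qDescFactorial_succ_succ (n k : ℕ) :
    qDescFactorial q (n + 1) (k + 1) = qInt q (n + 1) * qDescFactorial q n k := by
  simp only [qDescFactorial, prod_range_succ', Nat.succ_sub_succ, Nat.sub_zero]
  ring

lemma qDescFactorial_eq_zero_of_lt {n k : ℕ} (h : n < k) : qDescFactorial q n k = 0 :=
  prod_eq_zero (mem_range.mpr h) (by simp [qInt_zero])

lemma qDescFactorial_succ_left {n i : ℕ} (h : i ≤ n + 1) :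
    qDescFactorial q (n + 1) i =
      qDescFactorial q n i + q ^ (n + 1 - i) * qInt q i * qDescFactorial q n (i - 1) := by
  cases i with
  | zero => simp [qDescFactorial, qInt_zero]
  | succ i =>
    rw [qDescFactorial_succ_succ, qDescFactorial_succ_right, Nat.add_sub_cancel,
      show n + 1 = (n - i) + (i + 1) by omega, qInt_add,
      show n - i + (i + 1) - (i + 1) = n - i by omega]
    ring

lemma qDescFactorial_mul_qFact {n k : ℕ} (h : k ≤ n) :
    qDescFactorial q n k * qFact q (n - k) = qFact q n := by
  induction k with
  | zero => simp [qDescFactorial]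
  | succ k ih =>
    rw [← ih (by omega), qFact_eq_qFact_mul_qInt q (show 0 < n - k by omega),
      qDescFactorial_succ_right, show n - k - 1 = n - (k + 1) by omega]
    ring

end QArithmetic

section Coefficients

variable {R : Type*} [CommRing R] (q : R)

def dpMulCoeff (m n k : ℕ) : R :=
  (-1 : R) ^ k * q ^ (k * (k - 1) / 2) * qChoose q (m + n - k) m * qChoose q m k

def twistedMulCoeff (m n k : ℕ) : R :=
  (-1 : R) ^ k * q ^ (k * (k - 1) / 2) * qChoose q m k * qDescFactorial q n k

lemma dpCoeff_eq (y : R) (m n k : ℕ) : dpCoeff q y m n k = dpMulCoeff q m n k * y ^ k := rfl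

lemma dpMulCoeff_eq_zero_of_lt {m n k : ℕ} (h : m < k) : dpMulCoeff q m n k = 0 := by
  rw [dpMulCoeff, qChoose_eq_zero_of_lt q h, mul_zero]

lemma twistedMulCoeff_zero (m n : ℕ) : twistedMulCoeff q m n 0 = 1 := by
  simp [twistedMulCoeff, qChoose_zero_right, qDescFactorial]

lemma twistedMulCoeff_eq_zero_of_lt_left {m n k : ℕ} (h : m < k) : twistedMulCoeff q m n k = 0 := by
  rw [twistedMulCoeff, qChoose_eq_zero_of_lt q h]; ring

lemma twistedMulCoeff_eq_zero_of_lt_right {m n k : ℕ} (h : n < k) :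
    twistedMulCoeff q m n k = 0 := by
  rw [twistedMulCoeff, qDescFactorial_eq_zero_of_lt q h, mul_zero]

lemma twistedMulCoeff_succ_succ {m n k : ℕ} (h : k ≤ n) :
    twistedMulCoeff q m (n + 1) (k + 1) =
      twistedMulCoeff q m n (k + 1) - q ^ n * qInt q (m - k) * twistedMulCoeff q m n k := by
  have hn : qInt q (n + 1) = qInt q (n - k) + q ^ (n - k) * qInt q (k + 1) := by
    rw [← qInt_add]; congr 1; omega
  have hpow : q ^ n = q ^ (n - k) * q ^ k := by rw [← pow_add]; congr 1; omega
  simp only [twistedMulCoeff, qDescFactorial_succ_succ, qDescFactorial_succ_right,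
    Nat.triangle_succ, pow_add, hn, hpow]
  linear_combination (-1 : R) ^ (k + 1) * q ^ (k * (k - 1) / 2) * q ^ k * q ^ (n - k) *
    qDescFactorial q n k * qInt_succ_mul_qChoose_succ q m k

lemma twistedMulCoeff_mul_qInt_sub_qInt (m n k : ℕ) :
    twistedMulCoeff q m n k * (qInt q n - qInt q (m + n - k)) =
      -(q ^ n * qInt q (m - k) * twistedMulCoeff q m n k) := by
  rcases Nat.lt_or_ge m k with hmk | hkm
  · simp [twistedMulCoeff_eq_zero_of_lt_left q hmk]
  · rw [show m + n - k = n + (m - k) by omega, qInt_add]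
    ring

lemma dpMulCoeff_mul_qFact_mul_qFact {m n k : ℕ} (h : k ≤ n) :
    dpMulCoeff q m n k * qFact q m * qFact q n = twistedMulCoeff q m n k * qFact q (m + n - k) := by
  have h1 := qChoose_mul_qFact_mul_qFact q (show m ≤ m + n - k by omega)
  rw [show m + n - k - m = n - k by omega] at h1
  rw [dpMulCoeff, twistedMulCoeff, ← h1, ← qDescFactorial_mul_qFact q h]
  ring

end Coefficients

section Transport

variable {R S : Type*} [CommRing R] [CommRing S] (f : R →+* S) (q : R)

lemma map_qInt (n : ℕ) : f (qInt q n) = qInt (f q) n := by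
  simp [qInt]

lemma map_qFact (n : ℕ) : f (qFact q n) = qFact (f q) n := by
  induction n with
  | zero => simp [qFact]
  | succ n ih => simp [qFact, ih, map_qInt]

lemma map_qChoose (n k : ℕ) : f (qChoose q n k) = qChoose (f q) n k := by
  induction n generalizing k with
  | zero => cases k <;> simp [qChoose]
  | succ n ih => cases k <;> simp [qChoose, ih]

lemma map_qDescFactorial (n k : ℕ) : f (qDescFactorial q n k) = qDescFactorial (f q) n k := by
  simp [qDescFactorial, map_qInt]

lemma map_dpMulCoeff (m n k : ℕ) : f (dpMulCoeff q m n k) = dpMulCoeff (f q) m n k := by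
  simp [dpMulCoeff, map_qChoose]

lemma map_twistedMulCoeff (m n k : ℕ) :
    f (twistedMulCoeff q m n k) = twistedMulCoeff (f q) m n k := by
  simp [twistedMulCoeff, map_qChoose, map_qDescFactorial]

end Transport

section TwistedPow

variable {A : Type*} [CommRing A] (q y : A)

lemma twistedPow_zero : twistedPow q y 0 = 1 := prod_range_zero _

lemma twistedPow_succ (n : ℕ) :
    twistedPow q y (n + 1) = twistedPow q y n * (X + C (qInt q n * y)) :=
  prod_range_succ _ _

lemma sum_twistedPow_mul_X_add_C {N n : ℕ} (h : n ≤ N) (a : ℕ → A) (c : A) :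
    (∑ k ∈ range (n + 1), C (a k) * twistedPow q y (N - k)) * (X + C c) =
      ∑ k ∈ range (n + 1), C (a k) * twistedPow q y (N + 1 - k) +
        ∑ k ∈ range (n + 1), C (a k * (c - qInt q (N - k) * y)) * twistedPow q y (N - k) := by
  rw [sum_mul, ← sum_add_distrib]
  refine sum_congr rfl fun k hk => ?_
  rw [show N + 1 - k = N - k + 1 by have := mem_range.mp hk; omega, twistedPow_succ]
  simp only [map_mul, map_sub]
  ring

lemma twistedPow_mul_twistedPow (m n : ℕ) :
    twistedPow q y m * twistedPow q y n =
      ∑ k ∈ range (n + 1), C (twistedMulCoeff q m n k * y ^ k) * twistedPow q y (m + n - k) := by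
  induction n with
  | zero => simp [twistedPow_zero, twistedMulCoeff_zero]
  | succ n ih =>
    have hrec : ∀ k ∈ range (n + 1),
        C (twistedMulCoeff q m (n + 1) (k + 1) * y ^ (k + 1)) *
            twistedPow q y (m + (n + 1) - (k + 1)) =
          C (twistedMulCoeff q m n (k + 1) * y ^ (k + 1)) * twistedPow q y (m + n - k) -
          C (q ^ n * qInt q (m - k) * twistedMulCoeff q m n k * y ^ (k + 1)) *
            twistedPow q y (m + n - k) := by
      intro k hk
      rw [twistedMulCoeff_succ_succ q (by simpa [Nat.lt_succ_iff] using hk),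
        show m + (n + 1) - (k + 1) = m + n - k by omega, ← sub_mul, ← map_sub]
      ring_nf
    have hS1 : ∑ k ∈ range (n + 1),
          C (twistedMulCoeff q m n k * y ^ k) * twistedPow q y (m + n + 1 - k) =
        ∑ k ∈ range (n + 1), C (twistedMulCoeff q m n (k + 1) * y ^ (k + 1)) *
          twistedPow q y (m + n - k) +
        C (twistedMulCoeff q m (n + 1) 0 * y ^ 0) * twistedPow q y (m + (n + 1) - 0) := by
      rw [sum_range_succ', sum_range_succ _ n,
        twistedMulCoeff_eq_zero_of_lt_right q (Nat.lt_succ_self n), twistedMulCoeff_zero,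
        twistedMulCoeff_zero, show m + (n + 1) - 0 = m + n + 1 - 0 by omega]
      simp only [zero_mul, map_zero, add_zero]
      congr 1
      exact sum_congr rfl fun k _ => by rw [show m + n + 1 - (k + 1) = m + n - k by omega]
    have hS2 : ∑ k ∈ range (n + 1), C (twistedMulCoeff q m n k * y ^ k *
          (qInt q n * y - qInt q (m + n - k) * y)) * twistedPow q y (m + n - k) =
        -∑ k ∈ range (n + 1), C (q ^ n * qInt q (m - k) * twistedMulCoeff q m n k * y ^ (k + 1)) *
          twistedPow q y (m + n - k) := by
      rw [← sum_neg_distrib]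
      refine sum_congr rfl fun k _ => ?_
      rw [← neg_mul, ← map_neg]
      congr 2
      linear_combination y ^ (k + 1) * twistedMulCoeff_mul_qInt_sub_qInt q m n k
    rw [twistedPow_succ, ← mul_assoc, ih, sum_twistedPow_mul_X_add_C q y (by omega), hS1, hS2,
      sum_range_succ' _ (n + 1), sum_congr rfl hrec, sum_sub_distrib]
    abel

lemma prod_X_add_C_qInt_succ (n : ℕ) :
    ∏ i ∈ range n, (X + C (qInt q (i + 1) * y)) =
      ∑ i ∈ range (n + 1), C (qDescFactorial q n i * y ^ i) * twistedPow q y (n - i) := by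
  induction n with
  | zero => simp [twistedPow_zero, qDescFactorial]
  | succ n ih =>
    have hlin : ∀ i ∈ range (n + 1),
        qDescFactorial q n i * y ^ i * (qInt q (n + 1) * y - qInt q (n - i) * y) =
          q ^ (n - i) * qInt q (i + 1) * qDescFactorial q n i * y ^ (i + 1) := by
      intro i hi
      rw [show n + 1 = n - i + (i + 1) by have := mem_range.mp hi; omega, qInt_add]
      ring
    have hrec : ∀ i ∈ range (n + 2),
        C (qDescFactorial q (n + 1) i * y ^ i) * twistedPow q y (n + 1 - i) =
          C (qDescFactorial q n i * y ^ i) * twistedPow q y (n + 1 - i) +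
          C (q ^ (n + 1 - i) * qInt q i * qDescFactorial q n (i - 1) * y ^ i) *
            twistedPow q y (n + 1 - i) := by
      intro i hi
      rw [qDescFactorial_succ_left q (by have := mem_range.mp hi; omega), ← add_mul, ← map_add]
      ring_nf
    rw [prod_range_succ, ih, sum_twistedPow_mul_X_add_C q y le_rfl]
    conv_rhs => rw [sum_congr rfl hrec, sum_add_distrib, sum_range_succ _ (n + 1),
      qDescFactorial_eq_zero_of_lt q (Nat.lt_succ_self n), sum_range_succ' _ (n + 1)]
    simp only [qInt_zero, mul_zero, zero_mul, map_zero, add_zero]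
    congr 1
    refine sum_congr rfl fun i hi => ?_
    rw [hlin i hi, show n + 1 - (i + 1) = n - i by omega, Nat.add_sub_cancel]

variable {σ : A →+* A} {q y}

lemma eval₂_twistedPow (hq : σ q = q) (hy : σ y = q * y) (n : ℕ) :
    (twistedPow q y n).eval₂ (C.comp σ) (X + C y) =
      ∑ i ∈ range (n + 1), C (qDescFactorial q n i * y ^ i) * twistedPow q y (n - i) := by
  rw [← prod_X_add_C_qInt_succ, twistedPow, ← coe_eval₂RingHom, map_prod]
  refine prod_congr rfl fun i _ => ?_
  rw [coe_eval₂RingHom, eval₂_add, eval₂_X, eval₂_C, RingHom.comp_apply, map_mul, map_qInt, hq,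
    hy, add_assoc, ← map_add, qInt_succ]
  congr 2
  ring

lemma degree_twistedPow [IsDomain A] (n : ℕ) : (twistedPow q y n).degree = n := by
  simp only [twistedPow, degree_prod, degree_X_add_C, sum_const, card_range]
  simp

end TwistedPow

section ShiftCoefficients

variable {R : Type*} [CommRing R]

def shiftMulIndex (m n : ℕ) : Finset ((_ : ℕ) × ℕ) :=
  (range (min m n + 1)).sigma fun k => range (m + n - k + 1)

def mulShiftIndex (m n : ℕ) : Finset ((_ : ℕ) × (_ : ℕ) × ℕ) :=
  (range (m + 1)).sigma fun i => (range (n + 1)).sigma fun j => range (min (m - i) (n - j) + 1)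

def shiftMulCoeff (q : R) (m n s : ℕ) : R :=
  ∑ x ∈ shiftMulIndex m n with x.1 + x.2 = s, q ^ x.1 * dpMulCoeff q m n x.1

def mulShiftCoeff (q : R) (m n s : ℕ) : R :=
  ∑ x ∈ mulShiftIndex m n with x.1 + x.2.1 + x.2.2 = s, dpMulCoeff q (m - x.1) (n - x.2.1) x.2.2

variable {S : Type*} [CommRing S] (f : R →+* S) (q : R)

lemma map_shiftMulCoeff (m n s : ℕ) : f (shiftMulCoeff q m n s) = shiftMulCoeff (f q) m n s := by
  simp [shiftMulCoeff, map_dpMulCoeff]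

lemma map_mulShiftCoeff (m n s : ℕ) : f (mulShiftCoeff q m n s) = mulShiftCoeff (f q) m n s := by
  simp [mulShiftCoeff, map_dpMulCoeff]

end ShiftCoefficients

section Expansion

variable {A B : Type*} [CommRing A] [CommRing B] [Algebra A B]

/-- The multiplication rule of `ξ^{[n]}` in `A⟨ξ⟩_{q,y}`. -/
def IsTwistedDPFamily (q y : A) (b : ℕ → B) : Prop :=
  ∀ m n, b m * b n = ∑ i ∈ range (min m n + 1), dpCoeff q y m n i • b (m + n - i)

lemma sum_smul_eq_sum_range_filter {ι M : Type*} [AddCommMonoid M] [Module A M] (S : Finset ι)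
    (d : ι → ℕ) {N : ℕ} (hd : ∀ x ∈ S, d x ≤ N) (c : ι → A) (y : A) (v : ℕ → M) :
    ∑ x ∈ S, (c x * y ^ d x) • v (d x) =
      ∑ s ∈ range (N + 1), ((∑ x ∈ S with d x = s, c x) * y ^ s) • v s := by
  rw [← sum_fiberwise_of_maps_to fun x hx => mem_range.mpr (Nat.lt_succ_of_le (hd x hx))]
  refine sum_congr rfl fun s _ => ?_
  rw [sum_mul, sum_smul]
  exact sum_congr rfl fun x hx => by rw [(mem_filter.mp hx).2]

variable {σ : A →+* A} {q y : A} {b : ℕ → B} {f : B →ₛₗ[σ] B}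

lemma map_mul_eq_sum_shiftMulCoeff (hq : σ q = q) (hy : σ y = q * y) (hb : IsTwistedDPFamily q y b)
    (hf : ∀ n, f (b n) = ∑ i ∈ range (n + 1), y ^ i • b (n - i)) (m n : ℕ) :
    f (b m * b n) = ∑ s ∈ range (m + n + 1), (shiftMulCoeff q m n s * y ^ s) • b (m + n - s) := by
  have hσ : ∀ k, σ (dpCoeff q y m n k) = q ^ k * dpMulCoeff q m n k * y ^ k := fun k => by
    rw [dpCoeff_eq, map_mul, map_pow, map_dpMulCoeff, hq, hy, mul_pow]
    ring
  calc f (b m * b n)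
      = ∑ x ∈ shiftMulIndex m n, (q ^ x.1 * dpMulCoeff q m n x.1 * y ^ (x.1 + x.2)) •
          b (m + n - (x.1 + x.2)) := by
        rw [hb, map_sum, shiftMulIndex, sum_sigma]
        refine sum_congr rfl fun k _ => ?_
        rw [map_smulₛₗ, hσ, hf, smul_sum]
        refine sum_congr rfl fun i _ => ?_
        rw [smul_smul, pow_add, ← mul_assoc, Nat.sub_sub]
    _ = _ := sum_smul_eq_sum_range_filter _ (fun x : (_ : ℕ) × ℕ => x.1 + x.2)
        (fun x hx => by simp only [shiftMulIndex, mem_sigma, mem_range] at hx; omega) _ y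
        (fun s => b (m + n - s))

lemma map_mul_map_eq_sum_mulShiftCoeff (hb : IsTwistedDPFamily q y b)
    (hf : ∀ n, f (b n) = ∑ i ∈ range (n + 1), y ^ i • b (n - i)) (m n : ℕ) :
    f (b m) * f (b n) =
      ∑ s ∈ range (m + n + 1), (mulShiftCoeff q m n s * y ^ s) • b (m + n - s) := by
  calc f (b m) * f (b n)
      = ∑ x ∈ mulShiftIndex m n, (dpMulCoeff q (m - x.1) (n - x.2.1) x.2.2 *
          y ^ (x.1 + x.2.1 + x.2.2)) • b (m + n - (x.1 + x.2.1 + x.2.2)) := by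
        rw [hf, hf, sum_mul_sum, mulShiftIndex, sum_sigma]
        refine sum_congr rfl fun i hi => ?_
        rw [sum_sigma]
        refine sum_congr rfl fun j hj => ?_
        rw [smul_mul_smul_comm, hb, smul_sum]
        refine sum_congr rfl fun k hk => ?_
        simp only [mem_range] at hi hj hk
        rw [smul_smul, dpCoeff_eq, show m - i + (n - j) - k = m + n - (i + j + k) by omega,
          pow_add, pow_add]
        ring_nf
    _ = _ := sum_smul_eq_sum_range_filter _ (fun x : (_ : ℕ) × (_ : ℕ) × ℕ => x.1 + x.2.1 + x.2.2)
        (fun x hx => by simp only [mulShiftIndex, mem_sigma, mem_range] at hx; omega) _ y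
        (fun s => b (m + n - s))

end Expansion

lemma LinearIndependent.eq_of_sum_range_smul_eq {A M : Type*} [CommRing A] [AddCommGroup M]
    [Module A M] {v : ℕ → M} (hv : LinearIndependent A v) {N : ℕ} {c d : ℕ → A}
    (h : ∑ s ∈ range (N + 1), c s • v (N - s) = ∑ s ∈ range (N + 1), d s • v (N - s))
    {s : ℕ} (hs : s ≤ N) : c s = d s := by
  have hrefl : ∀ e : ℕ → A, ∑ s ∈ range (N + 1), e s • v (N - s) =
      ∑ t ∈ range (N + 1), e (N - t) • v t := fun e => by
    rw [← sum_range_reflect]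
    exact sum_congr rfl fun t ht => by
      rw [Nat.add_sub_cancel, Nat.sub_sub_self (by simp at ht; omega)]
  have h0 := linearIndependent_iff'.mp hv (range (N + 1)) (fun t => c (N - t) - d (N - t))
    (by simp only [sub_smul, sum_sub_distrib, ← hrefl, h, sub_self]) (N - s) (by simp)
  rwa [Nat.sub_sub_self hs, sub_eq_zero] at h0

lemma qFact_X_ne_zero (n : ℕ) : qFact (X : ℤ[X]) n ≠ 0 := fun h => by
  simpa [map_qFact, qFact_one_left, Nat.factorial_ne_zero] using congrArg (evalRingHom 1) h

section Model

/-! In `K[X][X]` the inner variable plays the role of `y` and the outer one that of `ξ`. -/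

variable {K : Type*} [Field K] (q : K)

noncomputable def qScale : K[X] →+* K[X] := eval₂RingHom C (C q * X)

lemma qScale_C (a : K) : qScale q (C a) = C a := eval₂_C _ _

lemma qScale_X : qScale q X = C q * X := eval₂_X _ _

noncomputable def modelShift : K[X][X] →ₛₗ[qScale q] K[X][X] where
  toFun := eval₂ (C.comp (qScale q)) (X + C X)
  map_add' _ _ := eval₂_add _ _
  map_smul' a p := by simp [smul_eq_C_mul, eval₂_mul]

lemma modelShift_mul (u v : K[X][X]) : modelShift q (u * v) = modelShift q u * modelShift q v :=
  eval₂_mul _ _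

noncomputable def dividedTwistedPow (n : ℕ) : K[X][X] :=
  C (C (qFact q n)⁻¹) * twistedPow (C q) X n

variable {q}

lemma isTwistedDPFamily_dividedTwistedPow (hq : ∀ n, qFact q n ≠ 0) :
    IsTwistedDPFamily (C q) X (dividedTwistedPow q) := by
  intro m n
  have hterm : ∀ k ∈ range (n + 1), C (C (qFact q m)⁻¹) * C (C (qFact q n)⁻¹) *
      (C (twistedMulCoeff (C q) m n k * X ^ k) * twistedPow (C q) X (m + n - k)) =
        dpCoeff (C q) X m n k • dividedTwistedPow q (m + n - k) := fun k hk => by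
    have hK : (qFact q m)⁻¹ * (qFact q n)⁻¹ * twistedMulCoeff q m n k =
        dpMulCoeff q m n k * (qFact q (m + n - k))⁻¹ := by
      rw [eq_mul_inv_iff_mul_eq₀ (hq _), mul_assoc,
        ← dpMulCoeff_mul_qFact_mul_qFact q (mem_range_succ_iff.mp hk)]
      field_simp [hq m, hq n]
    have hC := congrArg (C ∘ C) hK
    simp only [Function.comp_apply, map_mul] at hC
    simp only [dividedTwistedPow, smul_eq_C_mul, dpCoeff_eq, ← map_twistedMulCoeff C,
      ← map_dpMulCoeff C, map_mul]
    linear_combination (C (X ^ k) * twistedPow (C q) X (m + n - k)) * hC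
  rw [dividedTwistedPow, dividedTwistedPow, mul_mul_mul_comm, twistedPow_mul_twistedPow, mul_sum,
    sum_congr rfl hterm]
  refine (sum_subset (range_subset_range.mpr (by omega)) fun k hk hk' => ?_).symm
  simp only [mem_range] at hk hk'
  rw [dpCoeff_eq, dpMulCoeff_eq_zero_of_lt _ (by omega), zero_mul, zero_smul]

lemma modelShift_dividedTwistedPow (hq : ∀ n, qFact q n ≠ 0) (n : ℕ) :
    modelShift q (dividedTwistedPow q n) =
      ∑ i ∈ range (n + 1), (X : K[X]) ^ i • dividedTwistedPow q (n - i) := by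
  change eval₂ _ _ (C (C (qFact q n)⁻¹) * _) = _
  rw [eval₂_mul, eval₂_C, RingHom.comp_apply, qScale_C,
    eval₂_twistedPow (qScale_C q q) (qScale_X q), mul_sum]
  refine sum_congr rfl fun i hi => ?_
  have hK : (qFact q n)⁻¹ * qDescFactorial q n i = (qFact q (n - i))⁻¹ := by
    rw [inv_mul_eq_iff_eq_mul₀ (hq n), ← qDescFactorial_mul_qFact q (mem_range_succ_iff.mp hi),
      mul_inv_cancel_right₀ (hq _)]
  have hC := congrArg (C ∘ C) hK
  simp only [Function.comp_apply, map_mul] at hC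
  simp only [dividedTwistedPow, smul_eq_C_mul, ← map_qDescFactorial C, map_mul, map_pow]
  linear_combination (C X ^ i * twistedPow (C q) X (n - i)) * hC

lemma linearIndependent_dividedTwistedPow (hq : ∀ n, qFact q n ≠ 0) :
    LinearIndependent K[X] (dividedTwistedPow q) :=
  Polynomial.Sequence.linearIndependent ⟨dividedTwistedPow q, fun n => by
    rw [dividedTwistedPow, degree_C_mul (C_ne_zero.mpr (inv_ne_zero (hq n))), degree_twistedPow]⟩

lemma shiftMulCoeff_eq_mulShiftCoeff_of_field (hq : ∀ n, qFact q n ≠ 0) {m n s : ℕ}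
    (hs : s ≤ m + n) : shiftMulCoeff q m n s = mulShiftCoeff q m n s := by
  have hfam := isTwistedDPFamily_dividedTwistedPow hq
  have hshift := modelShift_dividedTwistedPow hq
  have h := (map_mul_eq_sum_shiftMulCoeff (qScale_C q q) (qScale_X q) hfam hshift m n).symm.trans
    ((modelShift_mul q _ _).trans (map_mul_map_eq_sum_mulShiftCoeff hfam hshift m n))
  have hcoeff := (linearIndependent_dividedTwistedPow hq).eq_of_sum_range_smul_eq h hs
  rw [← map_shiftMulCoeff C, ← map_mulShiftCoeff C] at hcoeff
  exact C_injective (mul_right_cancel₀ (pow_ne_zero s X_ne_zero) hcoeff)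

end Model

lemma shiftMulCoeff_eq_mulShiftCoeff {R : Type*} [CommRing R] (q : R) {m n s : ℕ}
    (hs : s ≤ m + n) : shiftMulCoeff q m n s = mulShiftCoeff q m n s := by
  have hfact : ∀ n, qFact (algebraMap ℤ[X] (FractionRing ℤ[X]) X) n ≠ 0 := fun n => by
    rw [← map_qFact, map_ne_zero_iff _ (IsFractionRing.injective _ _)]
    exact qFact_X_ne_zero n
  have hX : shiftMulCoeff (X : ℤ[X]) m n s = mulShiftCoeff X m n s :=
    IsFractionRing.injective ℤ[X] (FractionRing ℤ[X]) <| by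
      rw [map_shiftMulCoeff, map_mulShiftCoeff]
      exact shiftMulCoeff_eq_mulShiftCoeff_of_field hfact hs
  simpa [map_shiftMulCoeff, map_mulShiftCoeff] using
    congrArg (eval₂RingHom (Int.castRingHom R) q) hX

section DividedPowerShift

variable {A B : Type*} [CommRing A] [CommRing B] [Algebra A B] {σ : A →+* A} {y : A}

lemma eq_comp_eval₂_of_map_mul {f : B →ₛₗ[σ] B} (hone : f 1 = 1)
    (hmul : ∀ u v, f (u * v) = f u * f v) (T : A[X] →ₐ[A] B)
    (hX : f (T X) = T X + algebraMap A B y) (p : A[X]) :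
    T (p.eval₂ (C.comp σ) (X + C y)) = f (T p) := by
  have hC : ∀ a, T (C a) = algebraMap A B a := T.commutes
  let F : B →+* B :=
    { toFun := f
      map_one' := hone
      map_mul' := hmul
      map_zero' := map_zero f
      map_add' := map_add f }
  refine RingHom.congr_fun (ringHom_ext
    (f := (T : A[X] →+* B).comp (eval₂RingHom (C.comp σ) (X + C y))) (g := F.comp T)
    (fun a => ?_) ?_) p
  · simp [F, hC, Algebra.algebraMap_eq_smul_one, hone]
  · simp [F, hX, hC]

variable (σ y) (b : Module.Basis ℕ A B)

noncomputable def dpShift : B →ₛₗ[σ] B :=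
  Finsupp.linearCombination A (fun n => ∑ i ∈ range (n + 1), y ^ i • b (n - i)) ∘ₛₗ
    (Finsupp.mapRange.linearMap σ.toSemilinearMap) ∘ₛₗ b.repr.toLinearMap

lemma dpShift_basis (n : ℕ) : dpShift σ y b (b n) = ∑ i ∈ range (n + 1), y ^ i • b (n - i) := by
  simp [dpShift]

variable {σ y b} {q : A}

lemma basis_zero_eq_one (hb : IsTwistedDPFamily q y b) : b 0 = 1 := by
  have h : LinearMap.mulLeft A (b 0) = LinearMap.id :=
    b.ext fun n => by simp [hb 0 n, dpCoeff, qChoose_zero_right]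
  simpa using LinearMap.congr_fun h 1

lemma dpShift_one (hb : IsTwistedDPFamily q y b) : dpShift σ y b 1 = 1 := by
  rw [← basis_zero_eq_one hb, dpShift_basis]
  simp

lemma dpShift_mul (hq : σ q = q) (hy : σ y = q * y) (hb : IsTwistedDPFamily q y b) (u v : B) :
    dpShift σ y b (u * v) = dpShift σ y b u * dpShift σ y b v := by
  set f := dpShift σ y b
  have hbasis : ∀ m n, f (b m * b n) = f (b m) * f (b n) := fun m n => by
    rw [map_mul_eq_sum_shiftMulCoeff hq hy hb (dpShift_basis σ y b),
      map_mul_map_eq_sum_mulShiftCoeff hb (dpShift_basis σ y b)]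
    exact sum_congr rfl fun s hs => by
      rw [shiftMulCoeff_eq_mulShiftCoeff q (Nat.lt_succ_iff.mp (mem_range.mp hs))]
  have hleft : ∀ m, f.comp (LinearMap.mulLeft A (b m)) = (LinearMap.mulLeft A (f (b m))).comp f :=
    fun m => b.ext fun n => hbasis m n
  have hright : f.comp (LinearMap.mulRight A v) = (LinearMap.mulRight A (f v)).comp f :=
    b.ext fun m => LinearMap.congr_fun (hleft m) v
  exact LinearMap.congr_fun hright u

end DividedPowerShift

/-- On the twisted divided power polynomial ring `B = A⟨ξ⟩_{q,y}` (basis `b`), there is a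
(unique) `σ_A`-semilinear endomorphism `σ_B` with `σ_B(ξ^{[n]}) = Σ_{i≤n} y^i ξ^{[n−i]}`, and it
is a ring homomorphism; moreover any `A`-algebra morphism `T : A[ξ] → B` with
`T(ξ^{(n)}) = (n)_q! ξ^{[n]}` intertwines the semilinear endomorphism `σ` of `A[ξ]` (with
`σ(ξ) = ξ + y`) and `σ_B`. -/
theorem statement10 {R A B : Type*} [CommRing R] [CommRing A] [Algebra R A]
    [CommRing B] [Algebra A B]
    (q : R) (σA : A →ₐ[R] A) (y : A) (hy : σA y = algebraMap R A q * y)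
    (b : Module.Basis ℕ A B)
    (hb : ∀ m n : ℕ, b m * b n = ∑ i ∈ Finset.range (min m n + 1),
      dpCoeff (algebraMap R A q) y m n i • b (m + n - i)) :
    ∃ σB : B → B,
      (∀ u v : B, σB (u + v) = σB u + σB v) ∧
      (∀ (a : A) (u : B), σB (a • u) = σA a • σB u) ∧
      (∀ n : ℕ, σB (b n) = ∑ i ∈ Finset.range (n + 1), y ^ i • b (n - i)) ∧
      (∀ u v : B, σB (u * v) = σB u * σB v) ∧
      σB 1 = 1 ∧
      (∀ T : Polynomial A →ₐ[A] B,
        (∀ n : ℕ, T (twistedPow (algebraMap R A q) y n) =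
          qFact (algebraMap R A q) n • b n) →
        ∀ f : Polynomial A,
          T (Polynomial.eval₂ (Polynomial.C.comp σA.toRingHom)
              (Polynomial.X + Polynomial.C y) f) = σB (T f)) := by
  have hq : σA.toRingHom (algebraMap R A q) = algebraMap R A q := σA.commutes q
  have hmul := dpShift_mul hq hy hb
  have hone := dpShift_one (σ := σA.toRingHom) hb
  refine ⟨dpShift σA.toRingHom y b, map_add _, map_smulₛₗ _, dpShift_basis _ _ b, hmul, hone,
    fun T hT => eq_comp_eval₂_of_map_mul hone hmul T ?_⟩
  have hX : T X = b 1 := by simpa [twistedPow, qInt, qFact_one] using hT 1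
  rw [hX, dpShift_basis]
  simp [sum_range_succ, basis_zero_eq_one hb, Algebra.algebraMap_eq_smul_one, add_comm]
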